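/- arXiv:0707.4382 — 6 statements merged into one kernel-verified Lean document; each statement's English description precedes it below -/
import Mathlib

section
/- If x̃, x ∈ ℝ³ satisfy the Hirota–Kimura equations x̃ᵢ − xᵢ = δᵢ(x̃ⱼxₖ + xⱼx̃ₖ) for all cyclic (ijk), then for each cyclic (ijk): (1 − δₖδᵢx̃ⱼ²)(1 − δᵢδⱼxₖ²) = (1 − δᵢδⱼx̃ₖ²)(1 − δₖδᵢxⱼ²). Equivalently, Fᵢ = (1 − δₖδᵢxⱼ²)/(1 − δᵢδⱼxₖ²) is an integral of motion of the Hirota–Kimura map. -/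
/-- If `x̃, x` satisfy the Hirota–Kimura equations `x̃ᵢ − xᵢ = δᵢ(x̃ⱼxₖ + xⱼx̃ₖ)`, then for
each cyclic `(ijk)`: `(1 − δₖδᵢx̃ⱼ²)(1 − δᵢδⱼxₖ²) = (1 − δᵢδⱼx̃ₖ²)(1 − δₖδᵢxⱼ²)`,
i.e. `Fᵢ = (1 − δₖδᵢxⱼ²)/(1 − δᵢδⱼxₖ²)` is an integral of the Hirota–Kimura map
(fraction-free form). -/
theorem HK_F_conserved (δ₁ δ₂ δ₃ x₁ x₂ x₃ t₁ t₂ t₃ : ℝ)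
    (h₁ : t₁ - x₁ = δ₁ * (t₂ * x₃ + x₂ * t₃))
    (h₂ : t₂ - x₂ = δ₂ * (t₃ * x₁ + x₃ * t₁))
    (h₃ : t₃ - x₃ = δ₃ * (t₁ * x₂ + x₁ * t₂)) :
    (1 - δ₃ * δ₁ * t₂^2) * (1 - δ₁ * δ₂ * x₃^2)
      = (1 - δ₁ * δ₂ * t₃^2) * (1 - δ₃ * δ₁ * x₂^2)
    ∧ (1 - δ₁ * δ₂ * t₃^2) * (1 - δ₂ * δ₃ * x₁^2)
      = (1 - δ₂ * δ₃ * t₁^2) * (1 - δ₁ * δ₂ * x₃^2)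
    ∧ (1 - δ₂ * δ₃ * t₁^2) * (1 - δ₃ * δ₁ * x₂^2)
      = (1 - δ₃ * δ₁ * t₂^2) * (1 - δ₂ * δ₃ * x₁^2) := by
  refine ⟨?_, ?_, ?_⟩
  · linear_combination (-(δ₁*δ₂*δ₃)*(t₂*x₃ - x₂*t₃)) * h₁ - (δ₃*δ₁*(t₂+x₂)) * h₂ + (δ₁*δ₂*(t₃+x₃)) * h₃
  · linear_combination (-(δ₁*δ₂*δ₃)*(t₃*x₁ - x₃*t₁)) * h₂ - (δ₁*δ₂*(t₃+x₃)) * h₃ + (δ₂*δ₃*(t₁+x₁)) * h₁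
  · linear_combination (-(δ₁*δ₂*δ₃)*(t₁*x₂ - x₁*t₂)) * h₃ - (δ₂*δ₃*(t₁+x₁)) * h₁ + (δ₃*δ₁*(t₂+x₂)) * h₂
end

section
/- If x̃, x ∈ ℝ³ satisfy the Hirota–Kimura equations x̃ᵢ − xᵢ = δᵢ(x̃ⱼxₖ + xⱼx̃ₖ), then for each cyclic (ijk): (x̃ᵢ − δᵢx̃ⱼx̃ₖ)(1 − δⱼδₖxᵢ²) = (xᵢ + δᵢxⱼxₖ)(1 − δⱼδₖx̃ᵢ²). -/
/-- If `x̃, x` satisfy the Hirota–Kimura equations, then for each cyclic `(ijk)`: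
`(x̃ᵢ − δᵢx̃ⱼx̃ₖ)(1 − δⱼδₖxᵢ²) = (xᵢ + δᵢxⱼxₖ)(1 − δⱼδₖx̃ᵢ²)`. -/
theorem HK_lemma_lk (δ₁ δ₂ δ₃ x₁ x₂ x₃ t₁ t₂ t₃ : ℝ)
    (h₁ : t₁ - x₁ = δ₁ * (t₂ * x₃ + x₂ * t₃))
    (h₂ : t₂ - x₂ = δ₂ * (t₃ * x₁ + x₃ * t₁))
    (h₃ : t₃ - x₃ = δ₃ * (t₁ * x₂ + x₁ * t₂)) :
    (t₁ - δ₁ * t₂ * t₃) * (1 - δ₂ * δ₃ * x₁^2)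
      = (x₁ + δ₁ * x₂ * x₃) * (1 - δ₂ * δ₃ * t₁^2)
    ∧ (t₂ - δ₂ * t₃ * t₁) * (1 - δ₃ * δ₁ * x₂^2)
      = (x₂ + δ₂ * x₃ * x₁) * (1 - δ₃ * δ₁ * t₂^2)
    ∧ (t₃ - δ₃ * t₁ * t₂) * (1 - δ₁ * δ₂ * x₃^2)
      = (x₃ + δ₃ * x₁ * x₂) * (1 - δ₁ * δ₂ * t₃^2) := by
  refine ⟨?_, ?_, ?_⟩
  · linear_combination (1 + δ₂*δ₃*x₁*t₁) * h₁ - δ₁*(t₃ - x₃) * h₂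
      - δ₁*δ₂*(t₃*x₁ + x₃*t₁) * h₃
  · linear_combination (1 + δ₃*δ₁*x₂*t₂) * h₂ - δ₂*(t₁ - x₁) * h₃
      - δ₂*δ₃*(t₁*x₂ + x₁*t₂) * h₁
  · linear_combination (1 + δ₁*δ₂*x₃*t₃) * h₃ - δ₃*(t₂ - x₂) * h₁
      - δ₃*δ₁*(t₂*x₃ + x₂*t₃) * h₂
end

section
/- If x̃, x ∈ ℝ³ satisfy the Hirota–Kimura equations, then for each cyclic (ijk): (x̃ᵢ − δᵢx̃ⱼx̃ₖ)² · (1 − δᵢδₖxⱼ²)(1 − δᵢδⱼxₖ²) = (xᵢ + δᵢxⱼxₖ)² · (1 − δᵢδₖx̃ⱼ²)(1 − δᵢδⱼx̃ₖ²). -/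
private lemma HK_key (δ₁ δ₂ δ₃ x₁ x₂ x₃ t₁ t₂ t₃ : ℝ)
    (h₁ : t₁ - x₁ = δ₁ * (t₂ * x₃ + x₂ * t₃))
    (h₂ : t₂ - x₂ = δ₂ * (t₃ * x₁ + x₃ * t₁))
    (h₃ : t₃ - x₃ = δ₃ * (t₁ * x₂ + x₁ * t₂)) :
    (t₁ - δ₁ * t₂ * t₃)^2 * ((1 - δ₁ * δ₃ * x₂^2) * (1 - δ₁ * δ₂ * x₃^2))
      = (x₁ + δ₁ * x₂ * x₃)^2 * ((1 - δ₁ * δ₃ * t₂^2) * (1 - δ₁ * δ₂ * t₃^2)) := by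
  have A : (t₁ - δ₁ * t₂ * t₃) * (1 - δ₁ * δ₂ * x₃^2)
      = (x₁ + δ₁ * x₂ * x₃) * (1 - δ₁ * δ₂ * t₃^2) := by
    linear_combination (1 - δ₁*δ₂*x₃*t₃) * h₁ - δ₁*(t₃ - x₃) * h₂
  have B : (t₁ - δ₁ * t₂ * t₃) * (1 - δ₁ * δ₃ * x₂^2)
      = (x₁ + δ₁ * x₂ * x₃) * (1 - δ₁ * δ₃ * t₂^2) := by
    linear_combination (1 - δ₁*δ₃*x₂*t₂) * h₁ - δ₁*(t₂ - x₂) * h₃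
  linear_combination (t₁ - δ₁*t₂*t₃) * (1 - δ₁*δ₂*x₃^2) * B
    + (x₁ + δ₁*x₂*x₃) * (1 - δ₁*δ₃*t₂^2) * A

/-- If `x̃, x` satisfy the Hirota–Kimura equations, then for each cyclic `(ijk)`:
`(x̃ᵢ − δᵢx̃ⱼx̃ₖ)²(1 − δᵢδₖxⱼ²)(1 − δᵢδⱼxₖ²) = (xᵢ + δᵢxⱼxₖ)²(1 − δᵢδₖx̃ⱼ²)(1 − δᵢδⱼx̃ₖ²)`. -/
theorem HK_minors_identity (δ₁ δ₂ δ₃ x₁ x₂ x₃ t₁ t₂ t₃ : ℝ)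
    (h₁ : t₁ - x₁ = δ₁ * (t₂ * x₃ + x₂ * t₃))
    (h₂ : t₂ - x₂ = δ₂ * (t₃ * x₁ + x₃ * t₁))
    (h₃ : t₃ - x₃ = δ₃ * (t₁ * x₂ + x₁ * t₂)) :
    (t₁ - δ₁ * t₂ * t₃)^2 * ((1 - δ₁ * δ₃ * x₂^2) * (1 - δ₁ * δ₂ * x₃^2))
      = (x₁ + δ₁ * x₂ * x₃)^2 * ((1 - δ₁ * δ₃ * t₂^2) * (1 - δ₁ * δ₂ * t₃^2))
    ∧ (t₂ - δ₂ * t₃ * t₁)^2 * ((1 - δ₂ * δ₁ * x₃^2) * (1 - δ₂ * δ₃ * x₁^2))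
      = (x₂ + δ₂ * x₃ * x₁)^2 * ((1 - δ₂ * δ₁ * t₃^2) * (1 - δ₂ * δ₃ * t₁^2))
    ∧ (t₃ - δ₃ * t₁ * t₂)^2 * ((1 - δ₃ * δ₂ * x₁^2) * (1 - δ₃ * δ₁ * x₂^2))
      = (x₃ + δ₃ * x₁ * x₂)^2 * ((1 - δ₃ * δ₂ * t₁^2) * (1 - δ₃ * δ₁ * t₂^2)) := by
  refine ⟨HK_key δ₁ δ₂ δ₃ x₁ x₂ x₃ t₁ t₂ t₃ h₁ h₂ h₃,
    ?_, ?_⟩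
  · have := HK_key δ₂ δ₃ δ₁ x₂ x₃ x₁ t₂ t₃ t₁ ?_ ?_ ?_
    · linarith [this]
    · linear_combination h₂
    · linear_combination h₃
    · linear_combination h₁
  · have := HK_key δ₃ δ₁ δ₂ x₃ x₁ x₂ t₃ t₁ t₂ ?_ ?_ ?_
    · linarith [this]
    · linear_combination h₃
    · linear_combination h₁
    · linear_combination h₂
end

section
/- If x̃, x satisfy the Hirota–Kimura equations and all relevant factors are nonzero, then det A(x̃,−δ)·φ(x) = det A(x,δ)·φ(x̃) for φ(x) = (1 − δ₁δ₂x₃²)(1 − δ₂δ₃x₁²); consequently the volume form dx₁∧dx₂∧dx₃/φ(x) is invariant under the Hirota–Kimura map. -/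
set_option maxHeartbeats 2000000 in
/-- If `x̃, x` satisfy the Hirota–Kimura equations and all relevant factors are nonzero,
then `det A(x̃,−δ)·φ(x) = det A(x,δ)·φ(x̃)` with `φ(x) = (1 − δ₁δ₂x₃²)(1 − δ₂δ₃x₁²)`;
consequently the volume form `dx₁∧dx₂∧dx₃/φ(x)` is invariant under the Hirota–Kimura map. -/
theorem HK_invariant_volume (δ₁ δ₂ δ₃ x₁ x₂ x₃ t₁ t₂ t₃ : ℝ)
    (h₁ : t₁ - x₁ = δ₁ * (t₂ * x₃ + x₂ * t₃))
    (h₂ : t₂ - x₂ = δ₂ * (t₃ * x₁ + x₃ * t₁))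
    (h₃ : t₃ - x₃ = δ₃ * (t₁ * x₂ + x₁ * t₂))
    (hA : (!![(1 : ℝ), -δ₁ * x₃, -δ₁ * x₂; -δ₂ * x₃, 1, -δ₂ * x₁;
              -δ₃ * x₂, -δ₃ * x₁, 1]).det ≠ 0)
    (hφx : (1 - δ₁ * δ₂ * x₃^2) * (1 - δ₂ * δ₃ * x₁^2) ≠ 0)
    (hφt : (1 - δ₁ * δ₂ * t₃^2) * (1 - δ₂ * δ₃ * t₁^2) ≠ 0) :
    (!![(1 : ℝ), δ₁ * t₃, δ₁ * t₂; δ₂ * t₃, 1, δ₂ * t₁; δ₃ * t₂, δ₃ * t₁, 1]).det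
        * ((1 - δ₁ * δ₂ * x₃^2) * (1 - δ₂ * δ₃ * x₁^2))
      = (!![(1 : ℝ), -δ₁ * x₃, -δ₁ * x₂; -δ₂ * x₃, 1, -δ₂ * x₁;
            -δ₃ * x₂, -δ₃ * x₁, 1]).det
        * ((1 - δ₁ * δ₂ * t₃^2) * (1 - δ₂ * δ₃ * t₁^2)) := by
  have hA' : (1 - δ₂*δ₃*x₁^2 - δ₁*δ₃*x₂^2 - δ₁*δ₂*x₃^2 - 2*δ₁*δ₂*δ₃*x₁*x₂*x₃) ≠ 0 := by
    contrapose! hA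
    simp [Matrix.det_fin_three]
    linear_combination hA
  have hD1 : (1 - δ₂*δ₃*x₁^2 - δ₁*δ₃*x₂^2 - δ₁*δ₂*x₃^2 - 2*δ₁*δ₂*δ₃*x₁*x₂*x₃) * t₁ = x₁ - δ₂*δ₃*x₁^3 + 2*δ₁*x₂*x₃ + δ₁*δ₃*x₁*x₂^2 + δ₁*δ₂*x₁*x₃^2 := by
    linear_combination (1 - δ₂*δ₃*x₁^2) * h₁ + (δ₁*x₃ + δ₁*δ₃*x₁*x₂) * h₂ + (δ₁*x₂ + δ₁*δ₂*x₁*x₃) * h₃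
  have hD2 : (1 - δ₂*δ₃*x₁^2 - δ₁*δ₃*x₂^2 - δ₁*δ₂*x₃^2 - 2*δ₁*δ₂*δ₃*x₁*x₂*x₃) * t₂ = x₂ + 2*δ₂*x₁*x₃ + δ₂*δ₃*x₁^2*x₂ - δ₁*δ₃*x₂^3 + δ₁*δ₂*x₂*x₃^2 := by
    linear_combination (δ₂*x₃ + δ₂*δ₃*x₁*x₂) * h₁ + (1 - δ₁*δ₃*x₂^2) * h₂ + (δ₂*x₁ + δ₁*δ₂*x₂*x₃) * h₃
  have hD3 : (1 - δ₂*δ₃*x₁^2 - δ₁*δ₃*x₂^2 - δ₁*δ₂*x₃^2 - 2*δ₁*δ₂*δ₃*x₁*x₂*x₃) * t₃ = x₃ + 2*δ₃*x₁*x₂ + δ₂*δ₃*x₁^2*x₃ + δ₁*δ₃*x₂^2*x₃ - δ₁*δ₂*x₃^3 := by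
    linear_combination (δ₃*x₂ + δ₂*δ₃*x₁*x₃) * h₁ + (δ₃*x₁ + δ₁*δ₃*x₂*x₃) * h₂ + (1 - δ₁*δ₂*x₃^2) * h₃
  have q1 : (1 - δ₂*δ₃*x₁^2 - δ₁*δ₃*x₂^2 - δ₁*δ₂*x₃^2 - 2*δ₁*δ₂*δ₃*x₁*x₂*x₃)^2 * (1 - δ₂*δ₃*t₁^2) = (1 - δ₂*δ₃*x₁^2) * (1 - 2*δ₂*δ₃*x₁^2 + δ₂^2*δ₃^2*x₁^4 - 2*δ₁*δ₃*x₂^2 - 2*δ₁*δ₂*x₃^2 - 8*δ₁*δ₂*δ₃*x₁*x₂*x₃ - 2*δ₁*δ₂*δ₃^2*x₁^2*x₂^2 - 2*δ₁*δ₂^2*δ₃*x₁^2*x₃^2 + δ₁^2*δ₃^2*x₂^4 - 2*δ₁^2*δ₂*δ₃*x₂^2*x₃^2 + δ₁^2*δ₂^2*x₃^4) := by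
    linear_combination (-(δ₂*δ₃) * ((1 - δ₂*δ₃*x₁^2 - δ₁*δ₃*x₂^2 - δ₁*δ₂*x₃^2 - 2*δ₁*δ₂*δ₃*x₁*x₂*x₃) * t₁ + (x₁ - δ₂*δ₃*x₁^3 + 2*δ₁*x₂*x₃ + δ₁*δ₃*x₁*x₂^2 + δ₁*δ₂*x₁*x₃^2))) * hD1
  have q3 : (1 - δ₂*δ₃*x₁^2 - δ₁*δ₃*x₂^2 - δ₁*δ₂*x₃^2 - 2*δ₁*δ₂*δ₃*x₁*x₂*x₃)^2 * (1 - δ₁*δ₂*t₃^2) = (1 - δ₁*δ₂*x₃^2) * (1 - 2*δ₂*δ₃*x₁^2 + δ₂^2*δ₃^2*x₁^4 - 2*δ₁*δ₃*x₂^2 - 2*δ₁*δ₂*x₃^2 - 8*δ₁*δ₂*δ₃*x₁*x₂*x₃ - 2*δ₁*δ₂*δ₃^2*x₁^2*x₂^2 - 2*δ₁*δ₂^2*δ₃*x₁^2*x₃^2 + δ₁^2*δ₃^2*x₂^4 - 2*δ₁^2*δ₂*δ₃*x₂^2*x₃^2 + δ₁^2*δ₂^2*x₃^4) := by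
    linear_combination (-(δ₁*δ₂) * ((1 - δ₂*δ₃*x₁^2 - δ₁*δ₃*x₂^2 - δ₁*δ₂*x₃^2 - 2*δ₁*δ₂*δ₃*x₁*x₂*x₃) * t₃ + (x₃ + 2*δ₃*x₁*x₂ + δ₂*δ₃*x₁^2*x₃ + δ₁*δ₃*x₂^2*x₃ - δ₁*δ₂*x₃^3))) * hD3
  have q2 : (1 - δ₂*δ₃*x₁^2 - δ₁*δ₃*x₂^2 - δ₁*δ₂*x₃^2 - 2*δ₁*δ₂*δ₃*x₁*x₂*x₃)^3 * (1 - δ₂*δ₃*t₁^2 - δ₁*δ₃*t₂^2 - δ₁*δ₂*t₃^2 + 2*δ₁*δ₂*δ₃*t₁*t₂*t₃)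
      = (1 - 2*δ₂*δ₃*x₁^2 + δ₂^2*δ₃^2*x₁^4 - 2*δ₁*δ₃*x₂^2 - 2*δ₁*δ₂*x₃^2 - 8*δ₁*δ₂*δ₃*x₁*x₂*x₃ - 2*δ₁*δ₂*δ₃^2*x₁^2*x₂^2 - 2*δ₁*δ₂^2*δ₃*x₁^2*x₃^2 + δ₁^2*δ₃^2*x₂^4 - 2*δ₁^2*δ₂*δ₃*x₂^2*x₃^2 + δ₁^2*δ₂^2*x₃^4) * (1 - 2*δ₂*δ₃*x₁^2 + δ₂^2*δ₃^2*x₁^4 - 2*δ₁*δ₃*x₂^2 - 2*δ₁*δ₂*x₃^2 - 8*δ₁*δ₂*δ₃*x₁*x₂*x₃ - 2*δ₁*δ₂*δ₃^2*x₁^2*x₂^2 - 2*δ₁*δ₂^2*δ₃*x₁^2*x₃^2 + δ₁^2*δ₃^2*x₂^4 - 2*δ₁^2*δ₂*δ₃*x₂^2*x₃^2 + δ₁^2*δ₂^2*x₃^4) := by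
    linear_combination (- δ₂*δ₃*t₁ - δ₂*δ₃*x₁ + 2*δ₂^2*δ₃^2*x₁^2*t₁ + 2*δ₂^2*δ₃^2*x₁^3 - δ₂^3*δ₃^3*x₁^4*t₁ - δ₂^3*δ₃^3*x₁^5 + 2*δ₁*δ₂*δ₃^2*x₂^2*t₁ + 4*δ₁*δ₂*δ₃^2*x₁*x₂^2 + 2*δ₁*δ₂^2*δ₃*x₃^2*t₁ + 4*δ₁*δ₂^2*δ₃*x₁*x₃^2 + 4*δ₁*δ₂^2*δ₃^2*x₁*x₂*x₃*t₁ + 16*δ₁*δ₂^2*δ₃^2*x₁^2*x₂*x₃ - 2*δ₁*δ₂^2*δ₃^3*x₁^2*x₂^2*t₁ + 4*δ₁*δ₂^2*δ₃^3*x₁^3*x₂^2 - 2*δ₁*δ₂^3*δ₃^2*x₁^2*x₃^2*t₁ + 4*δ₁*δ₂^3*δ₃^2*x₁^3*x₃^2 - 4*δ₁*δ₂^3*δ₃^3*x₁^3*x₂*x₃*t₁ + 2*δ₁^2*δ₂*δ₃^2*x₂^3*x₃ - δ₁^2*δ₂*δ₃^3*x₂^4*t₁ - 3*δ₁^2*δ₂*δ₃^3*x₁*x₂^4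 + 2*δ₁^2*δ₂^2*δ₃*x₂*x₃^3 - 2*δ₁^2*δ₂^2*δ₃^2*x₂^2*x₃^2*t₁ + 14*δ₁^2*δ₂^2*δ₃^2*x₁*x₂^2*x₃^2 - 4*δ₁^2*δ₂^2*δ₃^3*x₁*x₂^3*x₃*t₁ + 2*δ₁^2*δ₂^2*δ₃^3*x₁^2*x₂^3*x₃ - δ₁^2*δ₂^3*δ₃*x₃^4*t₁ - 3*δ₁^2*δ₂^3*δ₃*x₁*x₃^4 - 4*δ₁^2*δ₂^3*δ₃^2*x₁*x₂*x₃^3*t₁ + 2*δ₁^2*δ₂^3*δ₃^2*x₁^2*x₂*x₃^3 - 4*δ₁^2*δ₂^3*δ₃^3*x₁^2*x₂^2*x₃^2*t₁ - 2*δ₁^3*δ₂*δ₃^3*x₂^5*x₃ + 4*δ₁^3*δ₂^2*δ₃^2*x₂^3*x₃^3 - 2*δ₁^3*δ₂^3*δ₃*x₂*x₃^5) * hD1 + (- δ₁*δ₃*t₂ - δ₁*δ₃*x₂ + 2*δ₁*δ₂*δ₃*x₃*t₁ - 2*δ₁*δ₂*δ₃*x₁*x₃ + 4*δ₁*δ₂*δ₃^2*x₁*x₂*t₁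 + 2*δ₁*δ₂*δ₃^2*x₁^2*t₂ + 2*δ₁*δ₂^2*δ₃^2*x₁^3*x₃ - 4*δ₁*δ₂^2*δ₃^3*x₁^3*x₂*t₁ - δ₁*δ₂^2*δ₃^3*x₁^4*t₂ + δ₁*δ₂^2*δ₃^3*x₁^4*x₂ - 2*δ₁*δ₂^3*δ₃^3*x₁^4*x₃*t₁ + 2*δ₁^2*δ₃^2*x₂^2*t₂ + 2*δ₁^2*δ₃^2*x₂^3 + 2*δ₁^2*δ₂*δ₃*x₃^2*t₂ + 4*δ₁^2*δ₂*δ₃^2*x₁*x₂*x₃*t₂ + 4*δ₁^2*δ₂*δ₃^2*x₁*x₂^2*x₃ - 4*δ₁^2*δ₂*δ₃^3*x₁*x₂^3*t₁ - 2*δ₁^2*δ₂*δ₃^3*x₁^2*x₂^2*t₂ - 4*δ₁^2*δ₂^2*δ₃*x₃^3*t₁ + 2*δ₁^2*δ₂^2*δ₃*x₁*x₃^3 - 8*δ₁^2*δ₂^2*δ₃^2*x₁*x₂*x₃^2*t₁ - 2*δ₁^2*δ₂^2*δ₃^2*x₁^2*x₃^2*t₂ + 6*δ₁^2*δ₂^2*δ₃^2*x₁^2*x₂*x₃^2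 - 12*δ₁^2*δ₂^2*δ₃^3*x₁^2*x₂^2*x₃*t₁ - 4*δ₁^2*δ₂^2*δ₃^3*x₁^3*x₂*x₃*t₂ + 2*δ₁^2*δ₂^2*δ₃^3*x₁^3*x₂^2*x₃ - 4*δ₁^2*δ₂^3*δ₃^3*x₁^3*x₂*x₃^2*t₁ - δ₁^3*δ₃^3*x₂^4*t₂ - δ₁^3*δ₃^3*x₂^5 - 2*δ₁^3*δ₂*δ₃^2*x₂^2*x₃^2*t₂ - 2*δ₁^3*δ₂*δ₃^3*x₂^4*x₃*t₁ - 4*δ₁^3*δ₂*δ₃^3*x₁*x₂^3*x₃*t₂ - 2*δ₁^3*δ₂*δ₃^3*x₁*x₂^4*x₃ - δ₁^3*δ₂^2*δ₃*x₃^4*t₂ + δ₁^3*δ₂^2*δ₃*x₂*x₃^4 - 4*δ₁^3*δ₂^2*δ₃^2*x₁*x₂*x₃^3*t₂ + 2*δ₁^3*δ₂^2*δ₃^2*x₁*x₂^2*x₃^3 - 4*δ₁^3*δ₂^2*δ₃^3*x₁*x₂^3*x₃^2*t₁ - 4*δ₁^3*δ₂^2*δ₃^3*x₁^2*x₂^2*x₃^2*t₂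 + 2*δ₁^3*δ₂^3*δ₃*x₃^5*t₁ + 4*δ₁^3*δ₂^3*δ₃^2*x₁*x₂*x₃^4*t₁) * hD2 + (- δ₁*δ₂*t₃ - δ₁*δ₂*x₃ + 2*δ₁*δ₂*δ₃*t₁*t₂ - 2*δ₁*δ₂*δ₃*x₁*x₂ + 2*δ₁*δ₂^2*δ₃*x₁^2*t₃ - 4*δ₁*δ₂^2*δ₃^2*x₁^2*t₁*t₂ + 2*δ₁*δ₂^2*δ₃^2*x₁^3*x₂ - δ₁*δ₂^3*δ₃^2*x₁^4*t₃ + δ₁*δ₂^3*δ₃^2*x₁^4*x₃ + 2*δ₁*δ₂^3*δ₃^3*x₁^4*t₁*t₂ + 2*δ₁^2*δ₂*δ₃*x₂^2*t₃ - 4*δ₁^2*δ₂*δ₃^2*x₂^2*t₁*t₂ + 2*δ₁^2*δ₂*δ₃^2*x₁*x₂^3 + 2*δ₁^2*δ₂^2*x₃^2*t₃ + 2*δ₁^2*δ₂^2*x₃^3 - 4*δ₁^2*δ₂^2*δ₃*x₃^2*t₁*t₂ + 4*δ₁^2*δ₂^2*δ₃*x₁*x₂*x₃*t₃ + 4*δ₁^2*δ₂^2*δ₃*x₁*x₂*x₃^2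 - 8*δ₁^2*δ₂^2*δ₃^2*x₁*x₂*x₃*t₁*t₂ - 2*δ₁^2*δ₂^2*δ₃^2*x₁^2*x₂^2*t₃ + 6*δ₁^2*δ₂^2*δ₃^2*x₁^2*x₂^2*x₃ + 4*δ₁^2*δ₂^2*δ₃^3*x₁^2*x₂^2*t₁*t₂ - 2*δ₁^2*δ₂^3*δ₃*x₁^2*x₃^2*t₃ + 4*δ₁^2*δ₂^3*δ₃^2*x₁^2*x₃^2*t₁*t₂ - 4*δ₁^2*δ₂^3*δ₃^2*x₁^3*x₂*x₃*t₃ + 2*δ₁^2*δ₂^3*δ₃^2*x₁^3*x₂*x₃^2 + 8*δ₁^2*δ₂^3*δ₃^3*x₁^3*x₂*x₃*t₁*t₂ - δ₁^3*δ₂*δ₃^2*x₂^4*t₃ + δ₁^3*δ₂*δ₃^2*x₂^4*x₃ + 2*δ₁^3*δ₂*δ₃^3*x₂^4*t₁*t₂ - 2*δ₁^3*δ₂^2*δ₃*x₂^2*x₃^2*t₃ + 4*δ₁^3*δ₂^2*δ₃^2*x₂^2*x₃^2*t₁*t₂ - 4*δ₁^3*δ₂^2*δ₃^2*x₁*x₂^3*x₃*t₃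 + 2*δ₁^3*δ₂^2*δ₃^2*x₁*x₂^3*x₃^2 + 8*δ₁^3*δ₂^2*δ₃^3*x₁*x₂^3*x₃*t₁*t₂ - δ₁^3*δ₂^3*x₃^4*t₃ - δ₁^3*δ₂^3*x₃^5 + 2*δ₁^3*δ₂^3*δ₃*x₃^4*t₁*t₂ - 4*δ₁^3*δ₂^3*δ₃*x₁*x₂*x₃^3*t₃ - 2*δ₁^3*δ₂^3*δ₃*x₁*x₂*x₃^4 + 8*δ₁^3*δ₂^3*δ₃^2*x₁*x₂*x₃^3*t₁*t₂ - 4*δ₁^3*δ₂^3*δ₃^2*x₁^2*x₂^2*x₃^2*t₃ + 8*δ₁^3*δ₂^3*δ₃^3*x₁^2*x₂^2*x₃^2*t₁*t₂) * hD3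
  have hdetL : (!![(1 : ℝ), δ₁ * t₃, δ₁ * t₂; δ₂ * t₃, 1, δ₂ * t₁; δ₃ * t₂, δ₃ * t₁, 1]).det
      = 1 - δ₂*δ₃*t₁^2 - δ₁*δ₃*t₂^2 - δ₁*δ₂*t₃^2 + 2*δ₁*δ₂*δ₃*t₁*t₂*t₃ := by
    simp [Matrix.det_fin_three]; ring
  have hdetR : (!![(1 : ℝ), -δ₁ * x₃, -δ₁ * x₂; -δ₂ * x₃, 1, -δ₂ * x₁;
      -δ₃ * x₂, -δ₃ * x₁, 1]).det = (1 - δ₂*δ₃*x₁^2 - δ₁*δ₃*x₂^2 - δ₁*δ₂*x₃^2 - 2*δ₁*δ₂*δ₃*x₁*x₂*x₃) := by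
    simp [Matrix.det_fin_three]; ring
  rw [hdetL, hdetR]
  apply mul_left_cancel₀ (pow_ne_zero 4 hA')
  linear_combination ((1 - δ₂*δ₃*x₁^2 - δ₁*δ₃*x₂^2 - δ₁*δ₂*x₃^2 - 2*δ₁*δ₂*δ₃*x₁*x₂*x₃) * ((1 - δ₁ * δ₂ * x₃^2) * (1 - δ₂ * δ₃ * x₁^2))) * q2
    - ((1 - δ₂*δ₃*x₁^2 - δ₁*δ₃*x₂^2 - δ₁*δ₂*x₃^2 - 2*δ₁*δ₂*δ₃*x₁*x₂*x₃) * ((1 - δ₁*δ₂*x₃^2) * (1 - 2*δ₂*δ₃*x₁^2 + δ₂^2*δ₃^2*x₁^4 - 2*δ₁*δ₃*x₂^2 - 2*δ₁*δ₂*x₃^2 - 8*δ₁*δ₂*δ₃*x₁*x₂*x₃ - 2*δ₁*δ₂*δ₃^2*x₁^2*x₂^2 - 2*δ₁*δ₂^2*δ₃*x₁^2*x₃^2 + δ₁^2*δ₃^2*x₂^4 - 2*δ₁^2*δ₂*δ₃*x₂^2*x₃^2 + δ₁^2*δ₂^2*x₃^4))) * q1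
    - ((1 - δ₂*δ₃*x₁^2 - δ₁*δ₃*x₂^2 - δ₁*δ₂*x₃^2 - 2*δ₁*δ₂*δ₃*x₁*x₂*x₃) * ((1 - δ₂*δ₃*x₁^2 - δ₁*δ₃*x₂^2 - δ₁*δ₂*x₃^2 - 2*δ₁*δ₂*δ₃*x₁*x₂*x₃)^2 * (1 - δ₂*δ₃*t₁^2))) * q3
end

section
/- For any constants C₁, C₂, C₃ ∈ ℝ, the bracket on ℝ³ defined by {xᵢ,xⱼ} = Cᵢδⱼxₖ(1 − δₖδᵢxⱼ²) − Cⱼδᵢxₖ(1 − δⱼδₖxᵢ²) for cyclic (ijk) satisfies the Jacobi identity, hence defines a Poisson structure. -/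
/-- The `i`-th partial derivative of a function on `ℝ³`. -/
noncomputable def partialDeriv₃ (i : Fin 3) (F : (Fin 3 → ℝ) → ℝ) (x : Fin 3 → ℝ) : ℝ :=
  fderiv ℝ F x (Pi.single i 1)

/-- The Poisson tensor `πᵢⱼ = Cᵢδⱼxₖ(1 − δₖδᵢxⱼ²) − Cⱼδᵢxₖ(1 − δⱼδₖxᵢ²)` of the
Hirota–Kimura map, for cyclic `(ijk)`; indices `0,1,2` stand for `1,2,3`. -/
def HKtensor (C δ : Fin 3 → ℝ) (i j k : Fin 3) (x : Fin 3 → ℝ) : ℝ :=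
  C i * δ j * x k * (1 - δ k * δ i * (x j)^2) - C j * δ i * x k * (1 - δ j * δ k * (x i)^2)

/-- The bracket `{F,G} = Σ_{cyclic (ijk)} πᵢⱼ(∂ᵢF∂ⱼG − ∂ⱼF∂ᵢG)`. -/
noncomputable def HKbracket (C δ : Fin 3 → ℝ) (F G : (Fin 3 → ℝ) → ℝ) (x : Fin 3 → ℝ) : ℝ :=
    HKtensor C δ 0 1 2 x * (partialDeriv₃ 0 F x * partialDeriv₃ 1 G x
                          - partialDeriv₃ 1 F x * partialDeriv₃ 0 G x)
  + HKtensor C δ 1 2 0 x * (partialDeriv₃ 1 F x * partialDeriv₃ 2 G x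
                          - partialDeriv₃ 2 F x * partialDeriv₃ 1 G x)
  + HKtensor C δ 2 0 1 x * (partialDeriv₃ 2 F x * partialDeriv₃ 0 G x
                          - partialDeriv₃ 0 F x * partialDeriv₃ 2 G x)

/-! ### Auxiliary material -/

section Aux

variable {A B : (Fin 3 → ℝ) → ℝ} {x : Fin 3 → ℝ} {i : Fin 3}

lemma pd_add (hA : DifferentiableAt ℝ A x) (hB : DifferentiableAt ℝ B x) :
    partialDeriv₃ i (fun y => A y + B y) x = partialDeriv₃ i A x + partialDeriv₃ i B x := by
  unfold partialDeriv₃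
  rw [fderiv_fun_add hA hB]
  simp

lemma pd_sub (hA : DifferentiableAt ℝ A x) (hB : DifferentiableAt ℝ B x) :
    partialDeriv₃ i (fun y => A y - B y) x = partialDeriv₃ i A x - partialDeriv₃ i B x := by
  unfold partialDeriv₃
  rw [fderiv_fun_sub hA hB]
  simp

lemma pd_mul (hA : DifferentiableAt ℝ A x) (hB : DifferentiableAt ℝ B x) :
    partialDeriv₃ i (fun y => A y * B y) x
      = partialDeriv₃ i A x * B x + A x * partialDeriv₃ i B x := by
  unfold partialDeriv₃
  rw [fderiv_fun_mul hA hB]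
  simp
  ring

lemma pd_const (c : ℝ) : partialDeriv₃ i (fun _ => c) x = 0 := by
  unfold partialDeriv₃
  simp

lemma pd_const_mul (c : ℝ) (hA : DifferentiableAt ℝ A x) :
    partialDeriv₃ i (fun y => c * A y) x = c * partialDeriv₃ i A x := by
  rw [pd_mul (differentiableAt_const c) hA, pd_const]
  ring

lemma pd_one_sub (hA : DifferentiableAt ℝ A x) :
    partialDeriv₃ i (fun y => 1 - A y) x = -(partialDeriv₃ i A x) := by
  rw [pd_sub (differentiableAt_const 1) hA, pd_const]
  ring

lemma pd_coord (i j : Fin 3) (x : Fin 3 → ℝ) :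
    partialDeriv₃ i (fun y => y j) x = if j = i then 1 else 0 := by
  have h : (fun y : Fin 3 → ℝ => y j)
      = (ContinuousLinearMap.proj j : (Fin 3 → ℝ) →L[ℝ] ℝ) := rfl
  unfold partialDeriv₃
  rw [h, ContinuousLinearMap.fderiv]
  simp [Pi.single_apply]

lemma pd_sq (i j : Fin 3) (x : Fin 3 → ℝ) :
    partialDeriv₃ i (fun y => (y j)^2) x = 2 * x j * (if j = i then 1 else 0) := by
  have h : (fun y : Fin 3 → ℝ => (y j)^2) = fun y => y j * y j := by
    funext y; ring
  rw [h, pd_mul (by fun_prop) (by fun_prop), pd_coord]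
  ring

lemma pd_contDiff {F : (Fin 3 → ℝ) → ℝ} (hF : ContDiff ℝ (⊤ : ℕ∞) F) (i : Fin 3) :
    ContDiff ℝ (⊤ : ℕ∞) (partialDeriv₃ i F) := by
  exact (hF.fderiv_right (by simp)).clm_apply contDiff_const

lemma pd_symm {F : (Fin 3 → ℝ) → ℝ} (hF : ContDiff ℝ (⊤ : ℕ∞) F) (i j : Fin 3) (x : Fin 3 → ℝ) :
    partialDeriv₃ i (partialDeriv₃ j F) x = partialDeriv₃ j (partialDeriv₃ i F) x := by
  have hdF : ContDiff ℝ (⊤ : ℕ∞) (fderiv ℝ F) := hF.fderiv_right (by simp)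
  have h1 : ∀ v : Fin 3 → ℝ, fderiv ℝ (fun y => fderiv ℝ F y v) x
      = (fderiv ℝ (fderiv ℝ F) x).flip v := by
    intro v
    rw [show (fun y => fderiv ℝ F y v) = fun y => (fderiv ℝ F y) ((fun _ => v) y) from rfl,
        fderiv_clm_apply (hdF.differentiable (by simp) x) (differentiableAt_const v)]
    simp
  show (fderiv ℝ (fun y => fderiv ℝ F y (Pi.single j 1)) x) (Pi.single i 1)
      = (fderiv ℝ (fun y => fderiv ℝ F y (Pi.single i 1)) x) (Pi.single j 1)
  rw [h1, h1]
  exact second_derivative_symmetric (fun y => (hF.differentiable (by simp) y).hasFDerivAt)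
    ((hdF.differentiable (by simp) x).hasFDerivAt) _ _

/-- `∂ᵢ(P·(AB − CD))` product rule. -/
lemma pd_prod4 {P C D : (Fin 3 → ℝ) → ℝ}
    (hP : DifferentiableAt ℝ P x) (hA : DifferentiableAt ℝ A x) (hB : DifferentiableAt ℝ B x)
    (hC : DifferentiableAt ℝ C x) (hD : DifferentiableAt ℝ D x) :
    partialDeriv₃ i (fun y => P y * (A y * B y - C y * D y)) x
      = partialDeriv₃ i P x * (A x * B x - C x * D x)
      + P x * (partialDeriv₃ i A x * B x + A x * partialDeriv₃ i B x
             - (partialDeriv₃ i C x * D x + C x * partialDeriv₃ i D x)) := by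
  rw [pd_mul (B := fun y => A y * B y - C y * D y) hP ((hA.mul hB).sub (hC.mul hD)),
      pd_sub (A := fun y => A y * B y) (B := fun y => C y * D y) (hA.mul hB) (hC.mul hD),
      pd_mul hA hB, pd_mul hC hD]

/-- Generic bracket associated with a bivector with components `p = π₀₁`, `q = π₁₂`, `r = π₂₀`. -/
noncomputable def Br (p q r : (Fin 3 → ℝ) → ℝ) (F G : (Fin 3 → ℝ) → ℝ) (x : Fin 3 → ℝ) : ℝ :=
    p x * (partialDeriv₃ 0 F x * partialDeriv₃ 1 G x - partialDeriv₃ 1 F x * partialDeriv₃ 0 G x)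
  + q x * (partialDeriv₃ 1 F x * partialDeriv₃ 2 G x - partialDeriv₃ 2 F x * partialDeriv₃ 1 G x)
  + r x * (partialDeriv₃ 2 F x * partialDeriv₃ 0 G x - partialDeriv₃ 0 F x * partialDeriv₃ 2 G x)

lemma pd_Br {p q r G H : (Fin 3 → ℝ) → ℝ}
    (hp : Differentiable ℝ p) (hq : Differentiable ℝ q) (hr : Differentiable ℝ r)
    (hG : ContDiff ℝ (⊤ : ℕ∞) G) (hH : ContDiff ℝ (⊤ : ℕ∞) H) (i : Fin 3) (x : Fin 3 → ℝ) :
    partialDeriv₃ i (Br p q r G H) x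
      = partialDeriv₃ i p x * (partialDeriv₃ 0 G x * partialDeriv₃ 1 H x
          - partialDeriv₃ 1 G x * partialDeriv₃ 0 H x)
      + p x * (partialDeriv₃ i (partialDeriv₃ 0 G) x * partialDeriv₃ 1 H x
             + partialDeriv₃ 0 G x * partialDeriv₃ i (partialDeriv₃ 1 H) x
             - (partialDeriv₃ i (partialDeriv₃ 1 G) x * partialDeriv₃ 0 H x
             + partialDeriv₃ 1 G x * partialDeriv₃ i (partialDeriv₃ 0 H) x))
      + (partialDeriv₃ i q x * (partialDeriv₃ 1 G x * partialDeriv₃ 2 H x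
          - partialDeriv₃ 2 G x * partialDeriv₃ 1 H x)
      + q x * (partialDeriv₃ i (partialDeriv₃ 1 G) x * partialDeriv₃ 2 H x
             + partialDeriv₃ 1 G x * partialDeriv₃ i (partialDeriv₃ 2 H) x
             - (partialDeriv₃ i (partialDeriv₃ 2 G) x * partialDeriv₃ 1 H x
             + partialDeriv₃ 2 G x * partialDeriv₃ i (partialDeriv₃ 1 H) x)))
      + (partialDeriv₃ i r x * (partialDeriv₃ 2 G x * partialDeriv₃ 0 H x
          - partialDeriv₃ 0 G x * partialDeriv₃ 2 H x)
      + r x * (partialDeriv₃ i (partialDeriv₃ 2 G) x * partialDeriv₃ 0 H x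
             + partialDeriv₃ 2 G x * partialDeriv₃ i (partialDeriv₃ 0 H) x
             - (partialDeriv₃ i (partialDeriv₃ 0 G) x * partialDeriv₃ 2 H x
             + partialDeriv₃ 0 G x * partialDeriv₃ i (partialDeriv₃ 2 H) x))) := by
  have dG : ∀ a : Fin 3, Differentiable ℝ (partialDeriv₃ a G) := fun a =>
    (pd_contDiff hG a).differentiable (by simp)
  have dH : ∀ a : Fin 3, Differentiable ℝ (partialDeriv₃ a H) := fun a =>
    (pd_contDiff hH a).differentiable (by simp)
  have e : Br p q r G H = fun y =>
      (p y * (partialDeriv₃ 0 G y * partialDeriv₃ 1 H y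
            - partialDeriv₃ 1 G y * partialDeriv₃ 0 H y)
     + q y * (partialDeriv₃ 1 G y * partialDeriv₃ 2 H y
            - partialDeriv₃ 2 G y * partialDeriv₃ 1 H y))
     + r y * (partialDeriv₃ 2 G y * partialDeriv₃ 0 H y
            - partialDeriv₃ 0 G y * partialDeriv₃ 2 H y) := rfl
  have m1 : DifferentiableAt ℝ (fun y => p y * (partialDeriv₃ 0 G y * partialDeriv₃ 1 H y
      - partialDeriv₃ 1 G y * partialDeriv₃ 0 H y)) x :=
    (hp x).mul (((dG 0 x).mul (dH 1 x)).sub ((dG 1 x).mul (dH 0 x)))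
  have m2 : DifferentiableAt ℝ (fun y => q y * (partialDeriv₃ 1 G y * partialDeriv₃ 2 H y
      - partialDeriv₃ 2 G y * partialDeriv₃ 1 H y)) x :=
    (hq x).mul (((dG 1 x).mul (dH 2 x)).sub ((dG 2 x).mul (dH 1 x)))
  have m3 : DifferentiableAt ℝ (fun y => r y * (partialDeriv₃ 2 G y * partialDeriv₃ 0 H y
      - partialDeriv₃ 0 G y * partialDeriv₃ 2 H y)) x :=
    (hr x).mul (((dG 2 x).mul (dH 0 x)).sub ((dG 0 x).mul (dH 2 x)))
  rw [e, pd_add (m1.fun_add m2) m3, pd_add m1 m2,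
      pd_prod4 (hp x) (dG 0 x) (dH 1 x) (dG 1 x) (dH 0 x),
      pd_prod4 (hq x) (dG 1 x) (dH 2 x) (dG 2 x) (dH 1 x),
      pd_prod4 (hr x) (dG 2 x) (dH 0 x) (dG 0 x) (dH 2 x)]

lemma Br_jacobi {p q r F G H : (Fin 3 → ℝ) → ℝ}
    (hp : Differentiable ℝ p) (hq : Differentiable ℝ q) (hr : Differentiable ℝ r)
    (hF : ContDiff ℝ (⊤ : ℕ∞) F) (hG : ContDiff ℝ (⊤ : ℕ∞) G) (hH : ContDiff ℝ (⊤ : ℕ∞) H) (x : Fin 3 → ℝ)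
    (hJ : p x * partialDeriv₃ 1 q x - r x * partialDeriv₃ 2 q x
        - p x * partialDeriv₃ 0 r x + q x * partialDeriv₃ 2 r x
        + r x * partialDeriv₃ 0 p x - q x * partialDeriv₃ 1 p x = 0) :
    Br p q r F (Br p q r G H) x + Br p q r G (Br p q r H F) x
      + Br p q r H (Br p q r F G) x = 0 := by
  have sF := pd_symm hF
  have sG := pd_symm hG
  have sH := pd_symm hH
  simp only [Br, pd_Br hp hq hr hG hH, pd_Br hp hq hr hH hF, pd_Br hp hq hr hF hG,
    sF 1 0 x, sF 2 0 x, sF 2 1 x, sG 1 0 x, sG 2 0 x, sG 2 1 x,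
    sH 1 0 x, sH 2 0 x, sH 2 1 x]
  linear_combination
    (partialDeriv₃ 0 F x * (partialDeriv₃ 1 G x * partialDeriv₃ 2 H x
        - partialDeriv₃ 2 G x * partialDeriv₃ 1 H x)
      - partialDeriv₃ 1 F x * (partialDeriv₃ 0 G x * partialDeriv₃ 2 H x
        - partialDeriv₃ 2 G x * partialDeriv₃ 0 H x)
      + partialDeriv₃ 2 F x * (partialDeriv₃ 0 G x * partialDeriv₃ 1 H x
        - partialDeriv₃ 1 G x * partialDeriv₃ 0 H x)) * hJ

lemma hk_differentiable (C δ : Fin 3 → ℝ) (a b c : Fin 3) :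
    Differentiable ℝ (HKtensor C δ a b c) := by
  unfold HKtensor
  fun_prop

lemma pd_hk (C δ : Fin 3 → ℝ) (a b c i : Fin 3) (x : Fin 3 → ℝ) :
    partialDeriv₃ i (HKtensor C δ a b c) x =
      (C a * δ b) * ((if c = i then 1 else 0) * (1 - δ c * δ a * (x b)^2)
                 - x c * (δ c * δ a * (2 * x b * (if b = i then 1 else 0))))
    - (C b * δ a) * ((if c = i then 1 else 0) * (1 - δ b * δ c * (x a)^2)
                 - x c * (δ b * δ c * (2 * x a * (if a = i then 1 else 0)))) := by
  have e : HKtensor C δ a b c = fun y =>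
      (C a * δ b) * (y c * (1 - δ c * δ a * (y b)^2))
    - (C b * δ a) * (y c * (1 - δ b * δ c * (y a)^2)) := by
    funext y
    simp only [HKtensor]
    ring
  rw [e, pd_sub (by fun_prop) (by fun_prop),
      pd_const_mul _ (by fun_prop), pd_const_mul _ (by fun_prop),
      pd_mul (by fun_prop) (by fun_prop), pd_mul (by fun_prop) (by fun_prop),
      pd_one_sub (by fun_prop), pd_one_sub (by fun_prop),
      pd_const_mul _ (by fun_prop), pd_const_mul _ (by fun_prop),
      pd_sq, pd_sq, pd_coord]
  ring

end Aux

/-- For any constants `C₁,C₂,C₃`, the bracket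
`{xᵢ,xⱼ} = Cᵢδⱼxₖ(1 − δₖδᵢxⱼ²) − Cⱼδᵢxₖ(1 − δⱼδₖxᵢ²)` satisfies the Jacobi identity, hence
defines a Poisson structure on `ℝ³`. -/
theorem HKbracket_jacobi (C δ : Fin 3 → ℝ)
    (F G H : (Fin 3 → ℝ) → ℝ)
    (hF : ContDiff ℝ (⊤ : ℕ∞) F) (hG : ContDiff ℝ (⊤ : ℕ∞) G) (hH : ContDiff ℝ (⊤ : ℕ∞) H)
    (x : Fin 3 → ℝ) :
    HKbracket C δ F (HKbracket C δ G H) x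
  + HKbracket C δ G (HKbracket C δ H F) x
  + HKbracket C δ H (HKbracket C δ F G) x = 0 := by
  have hp := hk_differentiable C δ 0 1 2
  have hq := hk_differentiable C δ 1 2 0
  have hr := hk_differentiable C δ 2 0 1
  have hJ : HKtensor C δ 0 1 2 x * partialDeriv₃ 1 (HKtensor C δ 1 2 0) x
      - HKtensor C δ 2 0 1 x * partialDeriv₃ 2 (HKtensor C δ 1 2 0) x
      - HKtensor C δ 0 1 2 x * partialDeriv₃ 0 (HKtensor C δ 2 0 1) x
      + HKtensor C δ 1 2 0 x * partialDeriv₃ 2 (HKtensor C δ 2 0 1) x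
      + HKtensor C δ 2 0 1 x * partialDeriv₃ 0 (HKtensor C δ 0 1 2) x
      - HKtensor C δ 1 2 0 x * partialDeriv₃ 1 (HKtensor C δ 0 1 2) x = 0 := by
    simp only [pd_hk, HKtensor, Fin.reduceEq, reduceIte]
    ring
  exact Br_jacobi hp hq hr hF hG hH x hJ
end

section
/- The function F₁ = (1 − δ₃δ₁x₂²)/(1 − δ₁δ₂x₃²) is a Casimir of the Poisson bracket {x₁,x₂}₁ = δ₂x₃(1 − δ₃δ₁x₂²), {x₂,x₃}₁ = 0, {x₃,x₁}₁ = −δ₃x₂(1 − δ₁δ₂x₃²): that is, {xᵢ, F₁}₁ = 0 for i = 1, 2, 3 wherever 1 − δ₁δ₂x₃² ≠ 0. -/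
/-- `F₁ = (1 − δ₃δ₁x₂²)/(1 − δ₁δ₂x₃²)` is a Casimir of the bracket
`{x₁,x₂}₁ = δ₂x₃(1 − δ₃δ₁x₂²)`, `{x₂,x₃}₁ = 0`, `{x₃,x₁}₁ = −δ₃x₂(1 − δ₁δ₂x₃²)`:
`{xᵢ,F₁}₁ = 0` for `i = 1,2,3` wherever `1 − δ₁δ₂x₃² ≠ 0`. Partial derivatives of `F₁` are
expressed as derivatives of one-variable slices, and
`{x₁,F₁}₁ = π₁₂∂₂F₁ − π₃₁∂₃F₁`, `{x₂,F₁}₁ = −π₁₂∂₁F₁`, `{x₃,F₁}₁ = π₃₁∂₁F₁`. -/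
theorem HK_F1_casimir (δ₁ δ₂ δ₃ x₁ x₂ x₃ : ℝ) (h : 1 - δ₁ * δ₂ * x₃^2 ≠ 0) :
    (δ₂ * x₃ * (1 - δ₃ * δ₁ * x₂^2))
        * deriv (fun s : ℝ => (1 - δ₃ * δ₁ * s^2) / (1 - δ₁ * δ₂ * x₃^2)) x₂
      - (-(δ₃ * x₂ * (1 - δ₁ * δ₂ * x₃^2)))
        * deriv (fun s : ℝ => (1 - δ₃ * δ₁ * x₂^2) / (1 - δ₁ * δ₂ * s^2)) x₃ = 0
    ∧ -((δ₂ * x₃ * (1 - δ₃ * δ₁ * x₂^2))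
        * deriv (fun s : ℝ => (1 - δ₃ * δ₁ * x₂^2) / (1 - δ₁ * δ₂ * x₃^2)) x₁) = 0
    ∧ (-(δ₃ * x₂ * (1 - δ₁ * δ₂ * x₃^2)))
        * deriv (fun s : ℝ => (1 - δ₃ * δ₁ * x₂^2) / (1 - δ₁ * δ₂ * x₃^2)) x₁ = 0 := by
  have hnum : HasDerivAt (fun s : ℝ => 1 - δ₃ * δ₁ * s^2) (-(δ₃ * δ₁ * (2 * x₂))) x₂ := by
    simpa using ((hasDerivAt_pow 2 x₂).const_mul (δ₃ * δ₁)).const_sub 1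
  have hden : HasDerivAt (fun s : ℝ => 1 - δ₁ * δ₂ * s^2) (-(δ₁ * δ₂ * (2 * x₃))) x₃ := by
    simpa using ((hasDerivAt_pow 2 x₃).const_mul (δ₁ * δ₂)).const_sub 1
  have d1 : deriv (fun s : ℝ => (1 - δ₃ * δ₁ * s^2) / (1 - δ₁ * δ₂ * x₃^2)) x₂
      = (-(δ₃ * δ₁ * (2 * x₂))) / (1 - δ₁ * δ₂ * x₃^2) :=
    (hnum.div_const _).deriv
  have d2 : deriv (fun s : ℝ => (1 - δ₃ * δ₁ * x₂^2) / (1 - δ₁ * δ₂ * s^2)) x₃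
      = (0 * (1 - δ₁ * δ₂ * x₃^2) - (1 - δ₃ * δ₁ * x₂^2) * (-(δ₁ * δ₂ * (2 * x₃))))
        / (1 - δ₁ * δ₂ * x₃^2)^2 :=
    ((hasDerivAt_const x₃ (1 - δ₃ * δ₁ * x₂^2)).div hden h).deriv
  have d3 : deriv (fun s : ℝ => (1 - δ₃ * δ₁ * x₂^2) / (1 - δ₁ * δ₂ * x₃^2)) x₁ = 0 :=
    deriv_const _ _
  refine ⟨?_, by simp [d3], by simp [d3]⟩
  rw [d1, d2]
  field_simp
  ring
end
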